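/- arXiv:2202.04932 — 3 statements merged into one kernel-verified Lean document; each statement's English description precedes it below -/
import Mathlib

section
/- Let Q be a homogeneous quadratic polynomial in n variables over the complex numbers, and suppose Q = \sum_{i=1}^{r} a_{2i-1} a_{2i} and Q = \sum_{i=1}^{r} b_{2i-1} b_{2i} are two representations of Q as sums of r products of linear forms, where r is minimal (no representation with fewer than r products exists). Then span{a_1,...,a_{2r}} = span{b_1,...,b_{2r}}. -/
/-!
Every representation `Q = ∑ aᵢ bᵢ` by linear forms has `derivSpan Q`, the span of the first
partial derivatives of `Q`, inside `span {aᵢ, bᵢ}`. Conversely, differentiating `Q` along a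
direction dual to one of the forms returns its partner, so when the `2r` forms are linearly
independent their span is exactly `derivSpan Q`. Splitting off one square at a time (complete the
square along a direction `u` with `Q(u) ≠ 0`) writes `Q` as a sum of `k = dim derivSpan Q`
squares, i.e. of `⌈k/2⌉` products since `x² + y² = (x + iy)(x - iy)`; so a minimal representation has
`2r ≤ k + 1`. If its forms are dependent, their span has dimension `< 2r`, hence `≤ k`, and the
inclusion is again an equality. Thus every minimal representation spans `derivSpan Q`.
-/

open MvPolynomial

noncomputable section

/-- A linear form: a homogeneous polynomial of degree 1. -/
def IsLinForm {σ : Type*} (p : MvPolynomial σ ℂ) : Prop := p.IsHomogeneous 1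

/-- `Q` admits a representation as a sum of `r` products of pairs of linear forms. -/
def HasRep {σ : Type*} (Q : MvPolynomial σ ℂ) (r : ℕ) : Prop :=
  ∃ a b : Fin r → MvPolynomial σ ℂ,
    (∀ i, IsLinForm (a i)) ∧ (∀ i, IsLinForm (b i)) ∧ Q = ∑ i, a i * b i

/-- `rank_s Q`: the minimal `r` such that `Q = ∑_{i=1}^r a_{2i-1} a_{2i}` for linear forms. -/
noncomputable def rankS {σ : Type*} (Q : MvPolynomial σ ℂ) : ℕ := sInf {r | HasRep Q r}

/-- The minimal space `MS Q`: the span of the linear forms appearing in a minimal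
representation of `Q` (taken as the supremum over all minimal representations,
which coincides with any single one by well-definedness). -/
noncomputable def MS {σ : Type*} (Q : MvPolynomial σ ℂ) : Submodule ℂ (MvPolynomial σ ℂ) :=
  ⨆ p : {ab : (Fin (rankS Q) → MvPolynomial σ ℂ) × (Fin (rankS Q) → MvPolynomial σ ℂ) //
      (∀ i, IsLinForm (ab.1 i)) ∧ (∀ i, IsLinForm (ab.2 i)) ∧ Q = ∑ i, ab.1 i * ab.2 i},
    Submodule.span ℂ (Set.range p.1.1 ∪ Set.range p.1.2)

/-- `C[V]₂`: the space of homogeneous quadratics depending only on linear forms in `V`. -/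
def quadOn {σ : Type*} (V : Submodule ℂ (MvPolynomial σ ℂ)) :
    Submodule ℂ (MvPolynomial σ ℂ) :=
  Submodule.span ℂ {q | ∃ v ∈ V, ∃ w ∈ V, q = v * w}

open Module

theorem LinearIndependent.exists_dual_apply_eq_single {K ι V : Type*} [Field K]
    [AddCommGroup V] [Module K V] {v : ι → V} (hv : LinearIndependent K v) (i : ι) :
    ∃ f : Dual K V, ∀ j, f (v j) = Finsupp.single j (1 : K) i := by
  obtain ⟨f, hf⟩ := LinearMap.exists_extend ((Finsupp.lapply i).comp hv.repr)
  refine ⟨f, fun j => ?_⟩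
  have h := LinearMap.congr_fun hf ⟨v j, Submodule.subset_span ⟨j, rfl⟩⟩
  rwa [LinearMap.comp_apply, LinearMap.comp_apply, hv.repr_eq_single j _ rfl,
    Finsupp.lapply_apply] at h

namespace MvPolynomial

theorem IsHomogeneous.eq_C_eval {σ R : Type*} [CommSemiring R] {p : MvPolynomial σ R}
    (hp : p.IsHomogeneous 0) (x : σ → R) : p = C (eval x p) := by
  rw [← totalDegree_zero_iff_isHomogeneous, totalDegree_eq_zero_iff_eq_C] at hp
  rw [hp, eval_C]

theorem eval_linearMap_X_of_isHomogeneous_one {σ R : Type*} [CommSemiring R]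
    (f : MvPolynomial σ R →ₗ[R] R) {l : MvPolynomial σ R} (hl : l.IsHomogeneous 1) :
    eval (fun i => f (X i)) l = f l := by
  rw [← mem_homogeneousSubmodule, homogeneousSubmodule_one_eq_span_X] at hl
  induction hl using Submodule.span_induction with
  | mem _ h => obtain ⟨i, rfl⟩ := h; simp
  | zero => simp
  | add _ _ _ _ h₁ h₂ => simp [h₁, h₂]
  | smul c _ _ h => rw [LinearMap.map_smul, ← h, smul_eval, smul_eq_mul]

section DirDeriv

variable {σ R : Type*} [Fintype σ] [CommRing R]

def dirDeriv (u : σ → R) : Derivation R (MvPolynomial σ R) (MvPolynomial σ R) :=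
  ∑ i, u i • pderiv i

theorem dirDeriv_apply (u : σ → R) (p : MvPolynomial σ R) :
    dirDeriv u p = ∑ i, u i • pderiv i p := by
  rw [dirDeriv, ← Derivation.coeFnAddMonoidHom_apply, map_sum, Finset.sum_apply]
  rfl

theorem dirDeriv_X (u : σ → R) (i : σ) : dirDeriv u (X i) = C (u i) := by
  classical
  simp [dirDeriv_apply, pderiv_X, Pi.single_apply, smul_eq_C_mul]

theorem dirDeriv_single [DecidableEq σ] (i : σ) : dirDeriv (Pi.single i (1 : R)) = pderiv i := by
  ext p
  rw [dirDeriv_apply, Finset.sum_eq_single i (fun j _ hj => by simp [hj]) (by simp)]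
  simp

theorem dirDeriv_comm (u v : σ → R) (p : MvPolynomial σ R) :
    dirDeriv u (dirDeriv v p) = dirDeriv v (dirDeriv u p) := by
  have h : ⁅dirDeriv u, dirDeriv v⁆ = 0 :=
    derivation_ext fun i => by simp [Derivation.commutator_apply, dirDeriv_X]
  rw [← sub_eq_zero, ← Derivation.commutator_apply, h, Derivation.zero_apply]

theorem IsHomogeneous.dirDeriv {p : MvPolynomial σ R} {n : ℕ} (hp : p.IsHomogeneous n)
    (u : σ → R) : (dirDeriv u p).IsHomogeneous (n - 1) := by
  rw [dirDeriv_apply]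
  exact IsHomogeneous.sum _ _ _ fun i _ => by
    rw [smul_eq_C_mul]; exact hp.pderiv.C_mul _

theorem eval_dirDeriv_self {p : MvPolynomial σ R} {n : ℕ} (hp : p.IsHomogeneous n)
    (u : σ → R) : eval u (dirDeriv u p) = n * eval u p := by
  have := congr(eval u $(hp.sum_X_mul_pderiv))
  simpa [dirDeriv_apply, map_sum, smul_eq_C_mul] using this

theorem dirDeriv_of_isHomogeneous_one {l : MvPolynomial σ R} (hl : l.IsHomogeneous 1)
    (u : σ → R) : dirDeriv u l = C (eval u l) := by
  rw [(hl.dirDeriv u).eq_C_eval u, eval_dirDeriv_self hl, Nat.cast_one, one_mul]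

theorem dirDeriv_sum_mul {ι : Type*} [Fintype ι] {a b : ι → MvPolynomial σ R}
    (ha : ∀ i, (a i).IsHomogeneous 1) (hb : ∀ i, (b i).IsHomogeneous 1) (u : σ → R) :
    dirDeriv u (∑ i, a i * b i) = ∑ i, (eval u (a i) • b i + eval u (b i) • a i) := by
  simp only [map_sum, Derivation.leibniz, dirDeriv_of_isHomogeneous_one (ha _),
    dirDeriv_of_isHomogeneous_one (hb _), smul_eq_mul, smul_eq_C_mul]
  refine Finset.sum_congr rfl fun i _ => by ring

end DirDeriv

section DerivSpan

variable {σ K : Type*} [Field K]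

def derivSpan (p : MvPolynomial σ K) : Submodule K (MvPolynomial σ K) :=
  Submodule.span K (Set.range fun i => pderiv i p)

@[simp]
theorem derivSpan_zero : derivSpan (0 : MvPolynomial σ K) = ⊥ := by
  simp [derivSpan]

variable [Fintype σ]

instance (p : MvPolynomial σ K) : FiniteDimensional K (derivSpan p) :=
  FiniteDimensional.span_of_finite K (Set.finite_range _)

theorem dirDeriv_mem_derivSpan (u : σ → K) (p : MvPolynomial σ K) :
    dirDeriv u p ∈ derivSpan p := by
  rw [dirDeriv_apply]
  exact Submodule.sum_mem _ fun i _ => Submodule.smul_mem _ _ (Submodule.subset_span ⟨i, rfl⟩)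

theorem derivSpan_le {p : MvPolynomial σ K} {N : Submodule K (MvPolynomial σ K)}
    (h : ∀ u, dirDeriv u p ∈ N) : derivSpan p ≤ N := by
  classical
  refine Submodule.span_le.mpr ?_
  rintro _ ⟨i, rfl⟩
  simpa [dirDeriv_single] using h (Pi.single i 1)

theorem eq_zero_of_derivSpan_eq_bot [Infinite K] {p : MvPolynomial σ K} {n : ℕ}
    (hp : p.IsHomogeneous n) (hn : (n : K) ≠ 0) (h : derivSpan p = ⊥) : p = 0 := by
  refine MvPolynomial.funext fun u => ?_
  have hu : dirDeriv u p = 0 := (Submodule.mem_bot K).mp (h ▸ dirDeriv_mem_derivSpan u p)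
  have := eval_dirDeriv_self hp u
  rw [hu, map_zero, eq_comm, mul_eq_zero] at this
  simpa [hn] using this

theorem derivSpan_sum_mul_le {ι : Type*} [Fintype ι] {a b : ι → MvPolynomial σ K}
    (ha : ∀ i, (a i).IsHomogeneous 1) (hb : ∀ i, (b i).IsHomogeneous 1) :
    derivSpan (∑ i, a i * b i) ≤ Submodule.span K (Set.range a ∪ Set.range b) :=
  derivSpan_le fun u => by
    rw [dirDeriv_sum_mul ha hb u]
    exact Submodule.sum_mem _ fun i _ => Submodule.add_mem _
      (Submodule.smul_mem _ _ (Submodule.subset_span (Or.inr ⟨i, rfl⟩)))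
      (Submodule.smul_mem _ _ (Submodule.subset_span (Or.inl ⟨i, rfl⟩)))

theorem span_le_derivSpan_of_linearIndependent {ι : Type*} [Fintype ι]
    {a b : ι → MvPolynomial σ K} (ha : ∀ i, (a i).IsHomogeneous 1)
    (hb : ∀ i, (b i).IsHomogeneous 1) (hli : LinearIndependent K (Sum.elim a b)) :
    Submodule.span K (Set.range a ∪ Set.range b) ≤ derivSpan (∑ i, a i * b i) := by
  classical
  rw [← Set.Sum.elim_range, Submodule.span_le]
  rintro _ ⟨t, rfl⟩
  obtain ⟨f, hf⟩ := hli.exists_dual_apply_eq_single t.swap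
  have key : dirDeriv (fun i => f (X i)) (∑ i, a i * b i) = Sum.elim a b t := by
    rw [dirDeriv_sum_mul ha hb]
    simp only [eval_linearMap_X_of_isHomogeneous_one f (ha _),
      eval_linearMap_X_of_isHomogeneous_one f (hb _)]
    have hfa := fun i => hf (Sum.inl i)
    have hfb := fun i => hf (Sum.inr i)
    rcases t with s | s <;> simp_all [Finsupp.single_apply, ite_smul]
  exact key ▸ dirDeriv_mem_derivSpan _ _

theorem finrank_derivSpan_sub_sq_lt {Q a : MvPolynomial σ K} {u : σ → K}
    (ha : a.IsHomogeneous 1) (haQ : a ∈ derivSpan Q) (hQa : dirDeriv u (Q - a ^ 2) = 0)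
    (hua : dirDeriv u a ≠ 0) : finrank K (derivSpan (Q - a ^ 2)) < finrank K (derivSpan Q) := by
  have hle : derivSpan (Q - a ^ 2) ≤ derivSpan Q := derivSpan_le fun v => by
    rw [map_sub, Derivation.leibniz_pow, dirDeriv_of_isHomogeneous_one ha, pow_one, smul_eq_mul,
      mul_comm, ← smul_eq_C_mul]
    exact sub_mem (dirDeriv_mem_derivSpan v Q) (Submodule.smul_of_tower_mem _ _
      (Submodule.smul_mem _ _ haQ))
  have hker : derivSpan (Q - a ^ 2) ≤ LinearMap.ker (dirDeriv u).toLinearMap :=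
    derivSpan_le fun v => by
      rw [LinearMap.mem_ker, Derivation.coeFn_coe, dirDeriv_comm, hQa, map_zero]
  exact Submodule.finrank_lt_finrank_of_lt
    (SetLike.lt_iff_le_and_exists.mpr ⟨hle, a, haQ, fun h => hua (hker h)⟩)

end DerivSpan

section SumOfSquares

variable {σ K : Type*} [Fintype σ] [Field K] [IsAlgClosed K] [NeZero (2 : K)]

theorem exists_eq_add_sq {Q : MvPolynomial σ K} (hQ : Q.IsHomogeneous 2) (hQ0 : Q ≠ 0) :
    ∃ a Q' : MvPolynomial σ K, a.IsHomogeneous 1 ∧ Q'.IsHomogeneous 2 ∧ Q = Q' + a ^ 2 ∧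
      finrank K (derivSpan Q') < finrank K (derivSpan Q) := by
  obtain ⟨u, hu⟩ : ∃ u, eval u Q ≠ 0 := by
    by_contra! h
    exact hQ0 (MvPolynomial.funext fun u => by simp [h u])
  obtain ⟨s, hs⟩ := IsAlgClosed.exists_eq_mul_self (eval u Q)⁻¹
  have hsc : s * s * eval u Q = 1 := by rw [← hs, inv_mul_cancel₀ hu]
  -- Euler gives `dirDeriv u (dirDeriv u Q) = 2 Q(u)`, so this scaling of `dirDeriv u Q` makes
  -- `dirDeriv u (Q - a ^ 2)` vanish.
  set a := (2⁻¹ * s) • dirDeriv u Q with ha_def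
  have ha : a.IsHomogeneous 1 := by
    rw [ha_def, smul_eq_C_mul]; exact (hQ.dirDeriv u).C_mul _
  have hDa : dirDeriv u a = C (s * eval u Q) := by
    rw [dirDeriv_of_isHomogeneous_one ha, ha_def, smul_eval, eval_dirDeriv_self hQ]
    congr 1
    push_cast
    field_simp
  have hDQ' : dirDeriv u (Q - a ^ 2) = 0 := by
    rw [map_sub, Derivation.leibniz_pow, hDa, pow_one, smul_eq_mul, mul_comm, ← smul_eq_C_mul,
      ha_def, smul_smul, ← Nat.cast_smul_eq_nsmul K, smul_smul]
    have h1 : ((2 : ℕ) : K) * (s * eval u Q * (2⁻¹ * s)) = 1 := by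
      push_cast; field_simp; linear_combination hsc
    rw [h1, one_smul, sub_self]
  exact ⟨a, Q - a ^ 2, ha, hQ.sub (by simpa using ha.pow 2), by ring,
    finrank_derivSpan_sub_sq_lt ha (Submodule.smul_mem _ _ (dirDeriv_mem_derivSpan u Q)) hDQ'
      (by rw [hDa, Ne, C_eq_zero]; exact right_ne_zero_of_mul_eq_one (by rwa [mul_assoc] at hsc))⟩

theorem exists_eq_add_sq_of_finrank_le {Q : MvPolynomial σ K} (hQ : Q.IsHomogeneous 2) {k : ℕ}
    (hk : finrank K (derivSpan Q) ≤ k + 1) :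
    ∃ a Q' : MvPolynomial σ K, a.IsHomogeneous 1 ∧ Q'.IsHomogeneous 2 ∧ Q = Q' + a ^ 2 ∧
      finrank K (derivSpan Q') ≤ k := by
  rcases eq_or_ne Q 0 with rfl | hQ0
  · refine ⟨0, 0, isHomogeneous_zero _ _ _, isHomogeneous_zero _ _ _, by ring, ?_⟩
    rw [derivSpan_zero, finrank_bot]
    exact k.zero_le
  · obtain ⟨a, Q', ha, hQ', rfl, hlt⟩ := exists_eq_add_sq hQ hQ0
    exact ⟨a, Q', ha, hQ', rfl, by omega⟩

end SumOfSquares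

end MvPolynomial

section MinimalRepresentation

variable {σ : Type*}

theorem hasRep_zero : HasRep (0 : MvPolynomial σ ℂ) 0 :=
  ⟨![], ![], finZeroElim, finZeroElim, by simp⟩

theorem HasRep.add_mul {Q a b : MvPolynomial σ ℂ} {m : ℕ} (h : HasRep Q m) (ha : IsLinForm a)
    (hb : IsLinForm b) : HasRep (Q + a * b) (m + 1) := by
  obtain ⟨x, y, hx, hy, rfl⟩ := h
  refine ⟨Fin.snoc x a, Fin.snoc y b, Fin.lastCases ?_ fun i => ?_, Fin.lastCases ?_ fun i => ?_,
    by simp [Fin.sum_univ_castSucc]⟩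
  exacts [by simpa using ha, by simpa using hx i, by simpa using hb, by simpa using hy i]

variable [Fintype σ]

theorem hasRep_of_finrank_derivSpan_le {Q : MvPolynomial σ ℂ} (hQ : Q.IsHomogeneous 2) {m : ℕ}
    (hm : finrank ℂ (derivSpan Q) ≤ 2 * m) : HasRep Q m := by
  induction m generalizing Q with
  | zero =>
    rw [eq_zero_of_derivSpan_eq_bot hQ two_ne_zero (Submodule.finrank_eq_zero.mp (by omega))]
    exact hasRep_zero
  | succ m ih =>
    obtain ⟨a, Q₁, ha, hQ₁, rfl, h₁⟩ := exists_eq_add_sq_of_finrank_le hQ (k := 2 * m + 1) hm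
    obtain ⟨b, Q₂, hb, hQ₂, rfl, h₂⟩ := exists_eq_add_sq_of_finrank_le hQ₁ h₁
    have hI : (C Complex.I : MvPolynomial σ ℂ) * C Complex.I = -1 := by
      rw [← map_mul, Complex.I_mul_I, map_neg, map_one]
    have key : Q₂ + b ^ 2 + a ^ 2 = Q₂ + (a + C Complex.I * b) * (a - C Complex.I * b) := by
      linear_combination b ^ 2 * hI
    rw [key]
    exact (ih hQ₂ h₂).add_mul (ha.add (hb.C_mul _)) (ha.sub (hb.C_mul _))

theorem two_mul_le_finrank_derivSpan_add_one {Q : MvPolynomial σ ℂ} (hQ : Q.IsHomogeneous 2)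
    {r : ℕ} (hmin : ∀ r' < r, ¬ HasRep Q r') : 2 * r ≤ finrank ℂ (derivSpan Q) + 1 := by
  by_contra! h
  exact hmin ((finrank ℂ (derivSpan Q) + 1) / 2) (by omega)
    (hasRep_of_finrank_derivSpan_le hQ (by omega))

theorem span_eq_derivSpan_of_minimal {Q : MvPolynomial σ ℂ} (hQ : Q.IsHomogeneous 2) {r : ℕ}
    {a b : Fin r → MvPolynomial σ ℂ} (ha : ∀ i, IsLinForm (a i)) (hb : ∀ i, IsLinForm (b i))
    (hrep : Q = ∑ i, a i * b i) (hmin : ∀ r' < r, ¬ HasRep Q r') :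
    Submodule.span ℂ (Set.range a ∪ Set.range b) = derivSpan Q := by
  have hrank := two_mul_le_finrank_derivSpan_add_one hQ hmin
  subst hrep
  have hle := derivSpan_sum_mul_le ha hb
  by_cases hli : LinearIndependent ℂ (Sum.elim a b)
  · exact le_antisymm (span_le_derivSpan_of_linearIndependent ha hb hli) hle
  · have hdep : Set.finrank ℂ (Set.range (Sum.elim a b)) < Fintype.card (Fin r ⊕ Fin r) := by
      refine (finrank_range_le_card (R := ℂ) (Sum.elim a b)).lt_of_ne fun h => hli ?_
      rw [linearIndependent_iff_card_eq_finrank_span, h]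
    rw [Set.finrank, Set.Sum.elim_range, Fintype.card_sum, Fintype.card_fin] at hdep
    have : FiniteDimensional ℂ (Submodule.span ℂ (Set.range a ∪ Set.range b)) :=
      FiniteDimensional.span_of_finite ℂ ((Set.finite_range a).union (Set.finite_range b))
    exact (Submodule.eq_of_le_of_finrank_le hle (by omega)).symm

end MinimalRepresentation

/-- well-definedness of the minimal space: any two minimal representations
of a homogeneous quadratic span the same space of linear forms. -/
theorem stmt_0 {n r : ℕ} (Q : MvPolynomial (Fin n) ℂ) (hQ : Q.IsHomogeneous 2)
    (a b a' b' : Fin r → MvPolynomial (Fin n) ℂ)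
    (ha : ∀ i, IsLinForm (a i)) (hb : ∀ i, IsLinForm (b i))
    (ha' : ∀ i, IsLinForm (a' i)) (hb' : ∀ i, IsLinForm (b' i))
    (hrep : Q = ∑ i, a i * b i) (hrep' : Q = ∑ i, a' i * b' i)
    (hmin : ∀ r' < r, ¬ HasRep Q r') :
    Submodule.span ℂ (Set.range a ∪ Set.range b) =
      Submodule.span ℂ (Set.range a' ∪ Set.range b') := by
  rw [span_eq_derivSpan_of_minimal hQ ha hb hrep hmin,
    span_eq_derivSpan_of_minimal hQ ha' hb' hrep' hmin]
end
end

section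
/- Let P be a homogeneous irreducible quadratic polynomial over C and let a, b be linear forms. Suppose a finite product \prod_{i∈I} T_i of quadratic polynomials lies in the radical of the ideal generated by P and ab. Then either rank_s(P) = 2 and a ∈ MS(P), or there exists i ∈ I such that T_i = αP + ac for some linear form c and scalar α ∈ C. -/
/-!
Replace the quotient by the linear form `a` with a degree-preserving algebra endomorphism `ρ` of
the polynomial ring whose kernel is `(a)` (for `a ≠ 0`, substitute for a variable occurring in `a`
its value on `a = 0`). Then `ρ P` divides a power of `∏ ρ (T i)`, and `ρ P ≠ 0` since an
irreducible quadratic has no linear factor. If `ρ P` is irreducible, it is prime and divides some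
`ρ (T i)`; comparing degrees, `ρ (T i) = α • ρ P`, so `a ∣ T i - α • P`. Otherwise `ρ P = l * m`
with `l, m` linear, and `P - l * m ∈ (a)` exhibits `P = l * m + a * c` as a minimal
representation containing `a`. All the degree bookkeeping rests on the fact that factors of a
homogeneous polynomial over a domain are homogeneous, read off from the degree and trailing degree
of `t ↦ p (t • x)`.
-/

open MvPolynomial

noncomputable section

namespace MvPolynomial

section Scale

variable {σ R : Type*} [CommSemiring R]

/-- `p (t • X)`, as a polynomial in `t`. -/
def scaleVars : MvPolynomial σ R →ₐ[R] Polynomial (MvPolynomial σ R) :=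
  aeval fun i => Polynomial.C (X i) * Polynomial.X

lemma scaleVars_monomial (s : σ →₀ ℕ) (c : R) :
    scaleVars (monomial s c) = Polynomial.monomial s.degree (monomial s c) := by
  rw [scaleVars, aeval_monomial, Finsupp.prod, Polynomial.algebraMap_apply]
  simp only [mul_pow, Finset.prod_mul_distrib, Finset.prod_pow_eq_pow_sum, ← map_pow, ← map_prod]
  rw [← mul_assoc, ← map_mul, Polynomial.C_mul_X_pow_eq_monomial, ← Finsupp.prod, algebraMap_eq,
    ← monomial_eq]
  rfl

lemma coeff_scaleVars (p : MvPolynomial σ R) (d : ℕ) :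
    (scaleVars p).coeff d = homogeneousComponent d p := by
  classical
  induction p using MvPolynomial.induction_on' with
  | add p q hp hq => simp [hp, hq]
  | monomial s c =>
    rw [scaleVars_monomial, Polynomial.coeff_monomial,
      homogeneousComponent_of_mem (isHomogeneous_monomial c rfl)]
    grind

lemma scaleVars_coeff_degree_ne_zero {p : MvPolynomial σ R} {d : σ →₀ ℕ} (hd : coeff d p ≠ 0) :
    (scaleVars p).coeff d.degree ≠ 0 := by
  classical
  rw [coeff_scaleVars]
  exact ne_of_apply_ne (coeff d) (by rwa [coeff_homogeneousComponent, if_pos rfl, coeff_zero])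

lemma scaleVars_ne_zero {p : MvPolynomial σ R} (hp : p ≠ 0) : scaleVars p ≠ 0 := by
  obtain ⟨d, hd⟩ := ne_zero_iff.mp hp
  exact fun h => scaleVars_coeff_degree_ne_zero hd (by rw [h, Polynomial.coeff_zero])

lemma IsHomogeneous.scaleVars_eq {p : MvPolynomial σ R} {n : ℕ} (hp : p.IsHomogeneous n) :
    scaleVars p = Polynomial.monomial n p := by
  classical
  ext1 d
  rw [coeff_scaleVars, Polynomial.coeff_monomial, homogeneousComponent_of_mem hp]
  grind

lemma IsHomogeneous.eq_C_coeff_zero {p : MvPolynomial σ R} (hp : p.IsHomogeneous 0) :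
    p = C (coeff 0 p) := by
  rw [← homogeneousComponent_zero, homogeneousComponent_eq_self hp]

lemma isHomogeneous_of_natTrailingDegree_scaleVars {p : MvPolynomial σ R}
    (h : (scaleVars p).natTrailingDegree = (scaleVars p).natDegree) :
    p.IsHomogeneous (scaleVars p).natDegree := by
  intro d hd
  have hd' := scaleVars_coeff_degree_ne_zero hd
  have := Polynomial.le_natDegree_of_ne_zero hd'
  have := Polynomial.natTrailingDegree_le_of_ne_zero hd'
  exact (DFunLike.congr_fun Finsupp.degree_eq_weight_one d).symm.trans (by omega)

end Scale

section Domain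

variable {σ R : Type*} [CommRing R] [IsDomain R]

theorem IsHomogeneous.of_mul {f g : MvPolynomial σ R} {n : ℕ} (hf : f ≠ 0) (hg : g ≠ 0)
    (h : (f * g).IsHomogeneous n) :
    ∃ i j, i + j = n ∧ f.IsHomogeneous i ∧ g.IsHomogeneous j := by
  have hf' := scaleVars_ne_zero hf
  have hg' := scaleVars_ne_zero hg
  have hfg : scaleVars f * scaleVars g = Polynomial.monomial n (f * g) := by
    rw [← map_mul, h.scaleVars_eq]
  have hdeg := Polynomial.natDegree_mul hf' hg'
  have htrail := Polynomial.natTrailingDegree_mul hf' hg'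
  rw [hfg, Polynomial.natDegree_monomial_eq n (mul_ne_zero hf hg)] at hdeg
  rw [hfg, Polynomial.natTrailingDegree_monomial (mul_ne_zero hf hg)] at htrail
  have := (scaleVars f).natTrailingDegree_le_natDegree
  have := (scaleVars g).natTrailingDegree_le_natDegree
  exact ⟨_, _, hdeg.symm, isHomogeneous_of_natTrailingDegree_scaleVars (by omega),
    isHomogeneous_of_natTrailingDegree_scaleVars (by omega)⟩

theorem IsHomogeneous.of_mul_left {q u : MvPolynomial σ R} {m j : ℕ} (hq : q.IsHomogeneous m)
    (hq0 : q ≠ 0) (h : (q * u).IsHomogeneous (m + j)) : u.IsHomogeneous j := by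
  rcases eq_or_ne u 0 with rfl | hu
  · exact isHomogeneous_zero _ _ _
  obtain ⟨i, j', hij, hqi, hu'⟩ := h.of_mul hq0 hu
  obtain rfl := hqi.inj_right hq hq0
  rwa [Nat.add_left_cancel hij] at hu'

theorem exists_isHomogeneous_eq_mul_of_dvd {q p : MvPolynomial σ R} {m j : ℕ}
    (hq : q.IsHomogeneous m) (hp : p.IsHomogeneous (m + j)) (h : q ∣ p) :
    ∃ u, u.IsHomogeneous j ∧ p = q * u := by
  obtain ⟨u, rfl⟩ := h
  rcases eq_or_ne q 0 with rfl | hq0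
  · exact ⟨0, isHomogeneous_zero _ _ _, by simp⟩
  · exact ⟨u, hq.of_mul_left hq0 hp, rfl⟩

theorem IsHomogeneous.not_isUnit {p : MvPolynomial σ R} {m : ℕ} (hp : p.IsHomogeneous m)
    (hm : m ≠ 0) : ¬IsUnit p := fun hu =>
  hm <| (hp.totalDegree hu.ne_zero).symm.trans (isUnit_iff_totalDegree_of_isReduced.mp hu).2

theorem not_irreducible_mul_of_isHomogeneous_one {l m : MvPolynomial σ R}
    (hl : l.IsHomogeneous 1) (hm : m.IsHomogeneous 1) : ¬Irreducible (l * m) := fun h =>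
  (of_irreducible_mul h).elim (hl.not_isUnit one_ne_zero) (hm.not_isUnit one_ne_zero)

theorem Irreducible.not_dvd_of_isHomogeneous {P a : MvPolynomial σ R} (hP : Irreducible P)
    (hP2 : P.IsHomogeneous 2) (ha : a.IsHomogeneous 1) : ¬a ∣ P := by
  rintro ⟨w, rfl⟩
  exact not_irreducible_mul_of_isHomogeneous_one ha
    (ha.of_mul_left (left_ne_zero_of_mul hP.ne_zero) hP2) hP

end Domain

section Reduction

variable {σ R : Type*} [CommRing R]

/-- Plays the role of the quotient map by the linear form `a`, but stays inside the polynomial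
ring, so that primality arguments remain available. -/
structure IsReductionMod (a : MvPolynomial σ R) (ρ : MvPolynomial σ R →ₐ[R] MvPolynomial σ R) :
    Prop where
  isHomogeneous_map_X : ∀ j, (ρ (X j)).IsHomogeneous 1
  map_self : ρ a = 0
  dvd_sub_map : ∀ p, a ∣ p - ρ p

variable {a : MvPolynomial σ R} {ρ : MvPolynomial σ R →ₐ[R] MvPolynomial σ R}

lemma IsReductionMod.isHomogeneous_map (hρ : IsReductionMod a ρ) {p : MvPolynomial σ R} {m : ℕ}
    (hp : p.IsHomogeneous m) : (ρ p).IsHomogeneous m := by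
  rw [aeval_unique ρ]
  simpa [Function.comp_def] using hp.aeval _ hρ.isHomogeneous_map_X

lemma IsReductionMod.map_dvd_map_of_mem_span_pair (hρ : IsReductionMod a ρ)
    {P b x : MvPolynomial σ R} (hx : x ∈ Ideal.span {P, a * b}) : ρ P ∣ ρ x := by
  obtain ⟨u, v, rfl⟩ := Ideal.mem_span_pair.mp hx
  exact ⟨ρ u, by simp [hρ.map_self, mul_comm]⟩

lemma IsReductionMod.map_eq_zero_iff (hρ : IsReductionMod a ρ) {p : MvPolynomial σ R} :
    ρ p = 0 ↔ a ∣ p := by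
  refine ⟨fun h => by simpa [h] using hρ.dvd_sub_map p, ?_⟩
  rintro ⟨u, rfl⟩
  rw [map_mul, hρ.map_self, zero_mul]

variable [IsDomain R]

theorem IsReductionMod.exists_eq_smul_add_mul (hρ : IsReductionMod a ρ) (ha : a.IsHomogeneous 1)
    {P T : MvPolynomial σ R} (hP : P.IsHomogeneous 2) (hT : T.IsHomogeneous 2) (h : ρ P ∣ ρ T) : ∃ (c : MvPolynomial σ R) (α : R), c.IsHomogeneous 1 ∧ T = α • P + a * c := by
  obtain ⟨u, hu, hTu⟩ :=
    exists_isHomogeneous_eq_mul_of_dvd (j := 0) (hρ.isHomogeneous_map hP)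
      (hρ.isHomogeneous_map hT) h
  obtain ⟨α, rfl⟩ : ∃ α, u = C α := ⟨_, hu.eq_C_coeff_zero⟩
  have hker : a ∣ T - C α * P := by
    rw [← hρ.map_eq_zero_iff, map_sub, map_mul, algHom_C, hTu, algebraMap_eq]
    ring
  obtain ⟨c, hc, hTc⟩ :=
    exists_isHomogeneous_eq_mul_of_dvd (j := 1) ha (hT.sub ((isHomogeneous_C _ _).mul hP)) hker
  exact ⟨c, α, hc, by rw [smul_eq_C_mul]; linear_combination hTc⟩

theorem IsReductionMod.exists_eq_mul_add_mul (hρ : IsReductionMod a ρ) (ha : a.IsHomogeneous 1)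
    {P l m : MvPolynomial σ R} (hP : P.IsHomogeneous 2) (hl : l.IsHomogeneous 1)
    (hm : m.IsHomogeneous 1) (h : ρ P = l * m) :
    ∃ c : MvPolynomial σ R, c.IsHomogeneous 1 ∧ P = l * m + a * c := by
  obtain ⟨c, hc, hPc⟩ :=
    exists_isHomogeneous_eq_mul_of_dvd (j := 1) ha (hP.sub (hl.mul hm)) (h ▸ hρ.dvd_sub_map P)
  exact ⟨c, hc, by linear_combination hPc⟩

end Reduction

section Field

variable {σ K : Type*} [Field K]

theorem IsHomogeneous.isUnit_of_zero {p : MvPolynomial σ K} (hp : p.IsHomogeneous 0)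
    (hp0 : p ≠ 0) : IsUnit p := by
  rw [hp.eq_C_coeff_zero] at hp0 ⊢
  exact (isUnit_iff_ne_zero.mpr (by simpa using hp0)).map C

theorem IsHomogeneous.exists_eq_mul_of_not_irreducible {Q : MvPolynomial σ K}
    (hQ : Q.IsHomogeneous 2) (hQ0 : Q ≠ 0) (hQirr : ¬Irreducible Q) :
    ∃ l m, l.IsHomogeneous 1 ∧ m.IsHomogeneous 1 ∧ Q = l * m := by
  obtain ⟨f, g, rfl, hfu, hgu⟩ : ∃ f g, Q = f * g ∧ ¬IsUnit f ∧ ¬IsUnit g := by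
    simpa [irreducible_iff, hQ.not_isUnit two_ne_zero] using hQirr
  obtain ⟨i, j, hij, hf, hg⟩ := hQ.of_mul (left_ne_zero_of_mul hQ0) (right_ne_zero_of_mul hQ0)
  have hi : i ≠ 0 := by
    rintro rfl
    exact hfu (hf.isUnit_of_zero (left_ne_zero_of_mul hQ0))
  have hj : j ≠ 0 := by
    rintro rfl
    exact hgu (hg.isUnit_of_zero (right_ne_zero_of_mul hQ0))
  obtain ⟨rfl, rfl⟩ : i = 1 ∧ j = 1 := by omega
  exact ⟨f, g, hf, hg, rfl⟩

section Substitution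

variable [DecidableEq σ]

def reductionMod (a : MvPolynomial σ K) (k : σ) : MvPolynomial σ K →ₐ[K] MvPolynomial σ K :=
  aeval (Function.update X k (X k - C (coeff (Finsupp.single k 1) a)⁻¹ * a))

lemma reductionMod_X (a : MvPolynomial σ K) (k j : σ) :
    reductionMod a k (X j) =
      X j - if j = k then C (coeff (Finsupp.single k 1) a)⁻¹ * a else 0 := by
  rcases eq_or_ne j k with rfl | hj <;> simp [reductionMod, *]

lemma reductionMod_of_mem_span_X (a : MvPolynomial σ K) (k : σ) {p : MvPolynomial σ K}
    (hp : p ∈ Submodule.span K (Set.range X)) :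
    reductionMod a k p =
      p - C ((coeff (Finsupp.single k 1) a)⁻¹ * coeff (Finsupp.single k 1) p) * a := by
  induction hp using Submodule.span_induction with
  | mem _ hx =>
    obtain ⟨j, rfl⟩ := hx
    rcases eq_or_ne j k with rfl | hj
    · simp [reductionMod_X]
    · simp [reductionMod_X, coeff_X, hj, Finsupp.single_left_inj one_ne_zero]
  | zero => simp
  | add p q _ _ hp hq =>
    rw [map_add, hp, hq, coeff_add, mul_add, map_add]
    ring
  | smul r p _ hp =>
    rw [map_smul, hp, coeff_smul, smul_eq_C_mul, smul_eq_C_mul, smul_eq_mul, mul_left_comm,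
      map_mul C r]
    ring

lemma isReductionMod_reductionMod {a : MvPolynomial σ K} (ha : a.IsHomogeneous 1) {k : σ}
    (hk : coeff (Finsupp.single k 1) a ≠ 0) : IsReductionMod a (reductionMod a k) := by
  refine ⟨fun j => ?_, ?_, fun p => ?_⟩
  · rw [reductionMod_X]
    split_ifs
    · exact (isHomogeneous_X K j).sub (by simpa using (isHomogeneous_C σ _).mul ha)
    · simpa using isHomogeneous_X K j
  · have ha_span : a ∈ Submodule.span K (Set.range X) := by
      rw [← homogeneousSubmodule_one_eq_span_X]
      exact ha
    rw [reductionMod_of_mem_span_X a k ha_span, inv_mul_cancel₀ hk, map_one, one_mul, sub_self]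
  · rw [← Ideal.mem_span_singleton, ← Ideal.Quotient.eq]
    suffices (Ideal.Quotient.mkₐ K _).comp (reductionMod a k) =
        Ideal.Quotient.mkₐ K (Ideal.span {a}) from (congrArg (· p) this).symm
    refine algHom_ext fun j => ?_
    simp only [AlgHom.comp_apply, Ideal.Quotient.mkₐ_eq_mk, reductionMod_X, Ideal.Quotient.eq]
    split_ifs <;> simp [Ideal.mem_span_singleton]

end Substitution

theorem exists_isReductionMod {a : MvPolynomial σ K} (ha : a.IsHomogeneous 1) :
    ∃ ρ, IsReductionMod a ρ := by
  classical
  rcases eq_or_ne a 0 with rfl | ha0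
  · exact ⟨AlgHom.id K _, fun j => isHomogeneous_X K j, rfl, fun p => by simp⟩
  obtain ⟨d, hd⟩ := ne_zero_iff.mp ha0
  obtain ⟨k, rfl⟩ := (Finsupp.sum_eq_one_iff d).mp
    (ha.degree_eq_sum_deg_support (mem_support_iff.mpr hd)).symm
  exact ⟨_, isReductionMod_reductionMod ha hd⟩

end Field

end MvPolynomial

section Rank

variable {σ : Type*}

lemma rankS_eq_two {Q : MvPolynomial σ ℂ} (hQ : Irreducible Q) (h2 : HasRep Q 2) :
    rankS Q = 2 := by
  have hle : rankS Q ≤ 2 := Nat.sInf_le h2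
  have hrep : HasRep Q (rankS Q) := Nat.sInf_mem (s := {r | HasRep Q r}) ⟨2, h2⟩
  interval_cases rankS Q
  · obtain ⟨A, B, -, -, hQ0⟩ := hrep
    exact absurd (by simpa using hQ0) hQ.ne_zero
  · obtain ⟨A, B, hA, hB, hQ1⟩ := hrep
    rw [Fin.sum_univ_one] at hQ1
    exact absurd (hQ1 ▸ hQ) (not_irreducible_mul_of_isHomogeneous_one (hA 0) (hB 0))
  · rfl

lemma mem_MS_of_eq_sum {Q : MvPolynomial σ ℂ} {r : ℕ} (hr : rankS Q = r)
    {A B : Fin r → MvPolynomial σ ℂ} (hA : ∀ i, IsLinForm (A i)) (hB : ∀ i, IsLinForm (B i))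
    (hQ : Q = ∑ i, A i * B i) (i : Fin r) : A i ∈ MS Q := by
  subst hr
  exact Submodule.mem_iSup_of_mem ⟨(A, B), hA, hB, hQ⟩
    (Submodule.subset_span (Or.inl ⟨i, rfl⟩))

lemma rankS_eq_two_and_mem_MS {Q l m a c : MvPolynomial σ ℂ} (hQ : Irreducible Q)
    (hl : IsLinForm l) (hm : IsLinForm m) (ha : IsLinForm a) (hc : IsLinForm c)
    (h : Q = l * m + a * c) : rankS Q = 2 ∧ a ∈ MS Q := by
  have hA : ∀ i, IsLinForm (![l, a] i) := Fin.forall_fin_two.mpr ⟨hl, ha⟩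
  have hB : ∀ i, IsLinForm (![m, c] i) := Fin.forall_fin_two.mpr ⟨hm, hc⟩
  have hsum : Q = ∑ i, ![l, a] i * ![m, c] i := by simp [h]
  have hrank := rankS_eq_two hQ ⟨_, _, hA, hB, hsum⟩
  exact ⟨hrank, mem_MS_of_eq_sum hrank hA hB hsum 1⟩

end Rank

theorem stmt_7_general {n : ℕ} (P : MvPolynomial (Fin n) ℂ)
    (hP2 : P.IsHomogeneous 2) (hPirr : Irreducible P)
    (a b : MvPolynomial (Fin n) ℂ) (hla : IsLinForm a)
    {ι : Type*} (I : Finset ι) (T : ι → MvPolynomial (Fin n) ℂ)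
    (hT : ∀ i ∈ I, (T i).IsHomogeneous 2)
    (hprod : (∏ i ∈ I, T i) ∈ (Ideal.span {P, a * b}).radical) :
    (rankS P = 2 ∧ a ∈ MS P) ∨
      ∃ i ∈ I, ∃ (c : MvPolynomial (Fin n) ℂ) (α : ℂ),
        IsLinForm c ∧ T i = α • P + a * c := by
  obtain ⟨ρ, hρ⟩ := exists_isReductionMod hla
  have hQ2 : (ρ P).IsHomogeneous 2 := hρ.isHomogeneous_map hP2
  have hQ0 : ρ P ≠ 0 := hρ.map_eq_zero_iff.not.mpr (hPirr.not_dvd_of_isHomogeneous hP2 hla)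
  by_cases hQirr : Irreducible (ρ P)
  · obtain ⟨N, hN⟩ := hprod
    have hdvd := hρ.map_dvd_map_of_mem_span_pair hN
    rw [map_pow, map_prod] at hdvd
    obtain ⟨i, hi, hQi⟩ := hQirr.prime.exists_mem_finset_dvd (hQirr.prime.dvd_of_dvd_pow hdvd)
    obtain ⟨c, α, hc, hTi⟩ := hρ.exists_eq_smul_add_mul hla hP2 (hT i hi) hQi
    exact Or.inr ⟨i, hi, c, α, hc, hTi⟩
  · obtain ⟨l, m, hl, hm, hQ⟩ := hQ2.exists_eq_mul_of_not_irreducible hQ0 hQirr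
    obtain ⟨c, hc, hPc⟩ := hρ.exists_eq_mul_add_mul hla hP2 hl hm hQ
    exact Or.inl (rankS_eq_two_and_mem_MS hPirr hl hm hla hc hPc)

/-- if a product of quadratics lies in `√⟨P, ab⟩` for an irreducible quadratic
`P` and linear forms `a, b`, then either `rank_s P = 2` and `a ∈ MS(P)`, or some factor
`T i` equals `αP + ac` for a linear form `c` and scalar `α`. -/
theorem stmt_7 {n : ℕ} (P : MvPolynomial (Fin n) ℂ)
    (hP2 : P.IsHomogeneous 2) (hPirr : Irreducible P)
    (a b : MvPolynomial (Fin n) ℂ) (hla : IsLinForm a) (hlb : IsLinForm b)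
    {ι : Type*} (I : Finset ι) (T : ι → MvPolynomial (Fin n) ℂ)
    (hT : ∀ i ∈ I, (T i).IsHomogeneous 2)
    (hprod : (∏ i ∈ I, T i) ∈ (Ideal.span {P, a * b}).radical) :
    (rankS P = 2 ∧ a ∈ MS P) ∨
      ∃ i ∈ I, ∃ (c : MvPolynomial (Fin n) ℂ) (α : ℂ),
        IsLinForm c ∧ T i = α • P + a * c :=
  stmt_7_general P hP2 hPirr a b hla I T hT hprod
end
end

section
/- Let P and Q be irreducible homogeneous quadratic polynomials over C with v_1ℓ_1 + v_2ℓ_2 = P and Q ∈ ⟨v_1, v_2⟩, and let A ∈ \sqrt{⟨P,Q⟩} be a polynomial. If A depends only on the linear forms in V = span{v_1, v_2, u_1, u_2} = MS(Q) (where Q = v_1 u_1 + v_2 u_2 with u_1 ∉ span{v_1,v_2}, and ℓ_1 ∉ MS(Q)), then A ∈ ⟨Q⟩. -/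
open MvPolynomial

noncomputable section

/-!
Choose a linear functional `f` vanishing on `V = span{v₁, v₂, u₁, u₂}` with `f ℓ₁ = 1`, and put
`w = v₁ + f(ℓ₂) v₂`, which is nonzero since `Q` is irreducible. Over `ℂ[x][1/w]` the substitution
`x ↦ x - f(x) · P / w` fixes every linear form in `V`, hence fixes `Q` and `A`, and sends
`P = v₁ℓ₁ + v₂ℓ₂` to `P - w · P / w = 0`. Applying it to `A ^ k = a P + b Q` and clearing
denominators gives `A ^ k w ^ e = r Q`; since `Q` is prime and, by degree, does not divide `w`,
it divides `A`.
-/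

theorem Submodule.exists_dual_forall_eq_zero_and_apply_eq_one {K V : Type*} [Field K]
    [AddCommGroup V] [Module K V] {p : Submodule K V} {x : V} (hx : x ∉ p) :
    ∃ f : Module.Dual K V, (∀ y ∈ p, f y = 0) ∧ f x = 1 := by
  have hx' : p.mkQ x ≠ 0 := by rwa [mkQ_apply, ne_eq, Quotient.mk_eq_zero]
  obtain ⟨g, hg⟩ := Module.Projective.exists_dual_eq_one K hx'
  exact ⟨g ∘ₗ p.mkQ, fun y hy => by simp [(Quotient.mk_eq_zero p).mpr hy], hg⟩

theorem mem_span_singleton_of_mem_radical_span_pair {R S : Type*} [CommRing R] [IsDomain R]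
    [CommRing S] [Algebra R S] {w : R} [IsLocalization.Away w S] (hw : w ≠ 0) {P Q A : R}
    (hQ : Prime Q) (hQw : ¬ Q ∣ w) (Φ : R →+* S) (hΦP : Φ P = 0)
    (hΦQ : Φ Q = algebraMap R S Q) (hΦA : Φ A = algebraMap R S A)
    (hA : A ∈ (Ideal.span {P, Q}).radical) : A ∈ Ideal.span {Q} := by
  obtain ⟨k, hk⟩ := Ideal.mem_radical_iff.mp hA
  obtain ⟨a, b, hab⟩ := Ideal.mem_span_pair.mp hk
  obtain ⟨e, r, hr⟩ := IsLocalization.Away.surj w (Φ b)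
  have hinj : Function.Injective (algebraMap R S) :=
    IsLocalization.injective S (powers_le_nonZeroDivisors_of_noZeroDivisors hw)
  have hcleared : A ^ k * w ^ e = r * Q := hinj <| by
    have := congrArg Φ hab
    rw [map_add, map_mul, map_mul, map_pow, hΦP, hΦQ, hΦA, mul_zero, zero_add] at this
    rw [map_mul, map_mul, map_pow, map_pow, ← this, ← hr]
    ring
  rcases hQ.dvd_or_dvd ⟨r, by rw [hcleared, mul_comm]⟩ with h | h
  · exact Ideal.mem_span_singleton.mpr (hQ.dvd_of_dvd_pow h)
  · exact absurd (hQ.dvd_of_dvd_pow h) hQw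

namespace MvPolynomial

variable {σ R : Type*}

theorem IsHomogeneous.le_of_dvd [CommRing R] [IsDomain R] {p q : MvPolynomial σ R} {m k : ℕ}
    (hp : p.IsHomogeneous m) (hq : q.IsHomogeneous k) (hq0 : q ≠ 0) (h : p ∣ q) : m ≤ k := by
  have hp0 : p ≠ 0 := by rintro rfl; exact hq0 (zero_dvd_iff.mp h)
  rw [← hp.totalDegree hp0, ← hq.totalDegree hq0]
  exact totalDegree_le_of_dvd_of_isDomain h hq0

theorem aeval_sub_smul_of_isHomogeneous_one [CommRing R] {S : Type*} [CommRing S] [Algebra R S]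
    (g : MvPolynomial σ R →ₐ[R] S) (f : Module.Dual R (MvPolynomial σ R)) (t : S)
    {p : MvPolynomial σ R} (hp : p.IsHomogeneous 1) :
    aeval (fun i => g (X i) - f (X i) • t) p = g p - f p • t := by
  have hspan : p ∈ Submodule.span R (Set.range X) := by
    rw [← homogeneousSubmodule_one_eq_span_X]; exact hp
  clear hp
  induction hspan using Submodule.span_induction with
  | mem x hx => obtain ⟨i, rfl⟩ := hx; simp
  | zero => simp
  | add x y _ _ hx hy => rw [map_add, map_add, hx, hy, map_add, add_smul]; abel
  | smul a x _ hx => rw [map_smul, map_smul, hx, map_smul, smul_sub, smul_eq_mul, mul_smul]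

theorem aeval_sub_smul_mul_add_mul_eq_zero [CommRing R] {S : Type*} [CommRing S] [Algebra R S]
    (g : MvPolynomial σ R →ₐ[R] S) (f : Module.Dual R (MvPolynomial σ R))
    {v₁ v₂ ℓ₁ ℓ₂ : MvPolynomial σ R} (hv₁ : v₁.IsHomogeneous 1) (hv₂ : v₂.IsHomogeneous 1)
    (hℓ₁ : ℓ₁.IsHomogeneous 1) (hℓ₂ : ℓ₂.IsHomogeneous 1) (hfv₁ : f v₁ = 0) (hfv₂ : f v₂ = 0)
    (hfℓ₁ : f ℓ₁ = 1) {t : S} (ht : g (v₁ + f ℓ₂ • v₂) * t = g (v₁ * ℓ₁ + v₂ * ℓ₂)) :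
    aeval (fun i => g (X i) - f (X i) • t) (v₁ * ℓ₁ + v₂ * ℓ₂) = 0 := by
  simp only [map_add, map_mul, map_smul] at ht ⊢
  rw [aeval_sub_smul_of_isHomogeneous_one g f t hv₁,
    aeval_sub_smul_of_isHomogeneous_one g f t hv₂, aeval_sub_smul_of_isHomogeneous_one g f t hℓ₁,
    aeval_sub_smul_of_isHomogeneous_one g f t hℓ₂, hfv₁, hfv₂, hfℓ₁]
  simp only [Algebra.smul_def, map_zero, map_one] at ht ⊢
  linear_combination -ht

end MvPolynomial

theorem IsLinForm.not_isUnit {σ : Type*} {p : MvPolynomial σ ℂ} (hp : IsLinForm p) : ¬ IsUnit p :=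
  fun h => absurd (MvPolynomial.IsHomogeneous.le_of_dvd hp (isHomogeneous_one σ ℂ) one_ne_zero
    h.dvd) (by omega)

theorem add_smul_ne_zero_of_irreducible {σ : Type*} {v₁ v₂ u₁ u₂ : MvPolynomial σ ℂ}
    (hv₂ : IsLinForm v₂) (hu₁ : IsLinForm u₁) (hu₂ : IsLinForm u₂)
    (hQ : Irreducible (v₁ * u₁ + v₂ * u₂)) (c : ℂ) :
    v₁ + c • v₂ ≠ 0 := by
  intro h
  have hfac : v₁ * u₁ + v₂ * u₂ = v₂ * (u₂ - C c * u₁) := by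
    rw [eq_neg_of_add_eq_zero_left h, smul_eq_C_mul]; ring
  rcases hQ.isUnit_or_isUnit hfac with h' | h'
  · exact hv₂.not_isUnit h'
  · exact IsLinForm.not_isUnit (hu₂.sub (hu₁.C_mul c)) h'

theorem stmt_10_general {n : ℕ} (v₁ v₂ u₁ u₂ ℓ₁ ℓ₂ : MvPolynomial (Fin n) ℂ)
    (hv₁ : IsLinForm v₁) (hv₂ : IsLinForm v₂) (hu₁ : IsLinForm u₁)
    (hu₂ : IsLinForm u₂) (hℓ₁ : IsLinForm ℓ₁) (hℓ₂ : IsLinForm ℓ₂)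
    (P Q A : MvPolynomial (Fin n) ℂ)
    (hP : P = v₁ * ℓ₁ + v₂ * ℓ₂) (hQ : Q = v₁ * u₁ + v₂ * u₂)
    (hQirr : Irreducible Q)
    (hℓ₁span : ℓ₁ ∉ Submodule.span ℂ ({v₁, v₂, u₁, u₂} : Set (MvPolynomial (Fin n) ℂ)))
    (hA : A ∈ (Ideal.span {P, Q}).radical)
    (hAonV : A ∈ Algebra.adjoin ℂ ({v₁, v₂, u₁, u₂} : Set (MvPolynomial (Fin n) ℂ))) :
    A ∈ Ideal.span ({Q} : Set (MvPolynomial (Fin n) ℂ)) := by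
  obtain ⟨f, hfV, hfℓ₁⟩ := Submodule.exists_dual_forall_eq_zero_and_apply_eq_one hℓ₁span
  set w := v₁ + f ℓ₂ • v₂
  have hw0 : w ≠ 0 := add_smul_ne_zero_of_irreducible hv₂ hu₁ hu₂ (hQ ▸ hQirr) _
  have hQw : ¬ Q ∣ w := by
    have hQ2 : Q.IsHomogeneous 2 := hQ ▸ (hv₁.mul hu₁).add (hv₂.mul hu₂)
    have hw1 : w.IsHomogeneous 1 := by
      simp only [w, smul_eq_C_mul]; exact hv₁.add (hv₂.C_mul _)
    exact fun h => absurd (hQ2.le_of_dvd hw1 hw0 h) (by omega)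
  let L := Localization.Away w
  let ι := IsScalarTower.toAlgHom ℂ (MvPolynomial (Fin n) ℂ) L
  let t : L := ι P * IsLocalization.Away.invSelf w
  let Φ : MvPolynomial (Fin n) ℂ →ₐ[ℂ] L := aeval fun i => ι (X i) - f (X i) • t
  have hΦV : Set.EqOn Φ ι {v₁, v₂, u₁, u₂} := by
    have hlin : ∀ p ∈ ({v₁, v₂, u₁, u₂} : Set _), IsLinForm p := by
      simp only [Set.mem_insert_iff, Set.mem_singleton_iff]
      rintro p (rfl | rfl | rfl | rfl) <;> assumption
    intro p hp
    rw [aeval_sub_smul_of_isHomogeneous_one ι f t (hlin p hp),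
      hfV p (Submodule.subset_span hp), zero_smul, sub_zero]
  have hwt : ι w * IsLocalization.Away.invSelf w = 1 := IsLocalization.Away.mul_invSelf w
  have hΦP : Φ P = 0 := hP ▸ aeval_sub_smul_mul_add_mul_eq_zero ι f hv₁ hv₂ hℓ₁ hℓ₂
    (hfV _ (Submodule.subset_span (by simp))) (hfV _ (Submodule.subset_span (by simp))) hfℓ₁
    (by rw [← hP, mul_left_comm, hwt, mul_one])
  refine mem_span_singleton_of_mem_radical_span_pair hw0
    (UniqueFactorizationMonoid.irreducible_iff_prime.mp hQirr) hQw Φ.toRingHom hΦP ?_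
    (AlgHom.adjoin_le_equalizer Φ ι hΦV hAonV) hA
  exact AlgHom.adjoin_le_equalizer Φ ι hΦV (hQ ▸ by
    refine add_mem (mul_mem ?_ ?_) (mul_mem ?_ ?_) <;> exact Algebra.subset_adjoin (by simp))

/-- Claim `cla:ideal-V`: with `P = v₁ℓ₁ + v₂ℓ₂`, `Q = v₁u₁ + v₂u₂`
irreducible quadratics, `u₁ ∉ span{v₁,v₂}`, `ℓ₁ ∉ MS(Q) = span{v₁,v₂,u₁,u₂}`, any
`A ∈ √⟨P,Q⟩` depending only on the linear forms `v₁,v₂,u₁,u₂` lies in `⟨Q⟩`. -/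
theorem stmt_10 {n : ℕ} (v₁ v₂ u₁ u₂ ℓ₁ ℓ₂ : MvPolynomial (Fin n) ℂ)
    (hv₁ : IsLinForm v₁) (hv₂ : IsLinForm v₂) (hu₁ : IsLinForm u₁)
    (hu₂ : IsLinForm u₂) (hℓ₁ : IsLinForm ℓ₁) (hℓ₂ : IsLinForm ℓ₂)
    (P Q A : MvPolynomial (Fin n) ℂ)
    (hP : P = v₁ * ℓ₁ + v₂ * ℓ₂) (hQ : Q = v₁ * u₁ + v₂ * u₂)
    (hPirr : Irreducible P) (hQirr : Irreducible Q)
    (hu₁span : u₁ ∉ Submodule.span ℂ ({v₁, v₂} : Set (MvPolynomial (Fin n) ℂ)))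
    (hMSQ : MS Q = Submodule.span ℂ ({v₁, v₂, u₁, u₂} : Set (MvPolynomial (Fin n) ℂ)))
    (hℓ₁span : ℓ₁ ∉ Submodule.span ℂ ({v₁, v₂, u₁, u₂} : Set (MvPolynomial (Fin n) ℂ)))
    (hA : A ∈ (Ideal.span {P, Q}).radical)
    (hAonV : A ∈ Algebra.adjoin ℂ ({v₁, v₂, u₁, u₂} : Set (MvPolynomial (Fin n) ℂ))) :
    A ∈ Ideal.span ({Q} : Set (MvPolynomial (Fin n) ℂ)) :=
  stmt_10_general v₁ v₂ u₁ u₂ ℓ₁ ℓ₂ hv₁ hv₂ hu₁ hu₂ hℓ₁ hℓ₂ P Q A hP hQ hQirr hℓ₁span hA hAonV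
end
end
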